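/- Let A, B ∈ ℂ^{n×n}, let ξ_1,…,ξ_{k−1} ∈ ℂ with each A − ξ_iB invertible, and let ϱ̂ ∈ ℂ be different from every ξ_i with A − ϱ̂B invertible. Then for any ϱ̌ ≠ ϱ̂ and any nonzero v ∈ ℂ^n, the rational Krylov subspace satisfies K_k^rat(A, B, v, (ξ_1,…,ξ_{k−1})) = (∏_{i=1}^{k−1} M(ϱ̂, ξ_i)) · K_k(M(ϱ̌, ϱ̂), v), where K_k(C, v) = span{v, Cv, …, C^{k−1}v} is the standard Krylov subspace; i.e., a rational Krylov subspace is the image under a rational matrix function of an ordinary Krylov subspace. -/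

import Mathlib

/-
Put `N = B (A - ϱ̂ B)⁻¹`. Then `M(μ, ϱ̂) = 1 + (ϱ̂ - μ) N`, `M(μ, ξ) = M(μ, ϱ̂) M(ϱ̂, ξ)`, and
`M(ϱ̂, ξ)` commutes with `N` because it is the inverse of `M(ξ, ϱ̂)`. Pulling the common factor
`∏ᵢ M(ϱ̂, ξᵢ)` out of the `j`-th rational Krylov vector leaves `q_j(N) v`, where
`q_j = ∏_{i ≥ j} (1 + (ϱ̂ - ξᵢ) X) * ∏_{i < j} (1 + (ϱ̂ - ϱᵢ) X)`. As poles and shifts differ,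
the `q_j` span all polynomials of degree `< k`: all but the last one share the linear factor
`f = 1 + (ϱ̂ - ξ_{k-2}) X`, which is coprime to the last one `p`, and
`ℂ p ⊕ f ℂ[X]_{k-1} = ℂ[X]_k`. The powers of `1 + (ϱ̂ - ϱ̌) X` span the same space, whose image
`{p(N) v : deg p < k}` is `K_k(M(ϱ̌, ϱ̂), v)`.
-/

open Matrix

/-- The elementary rational function M(ϱ,ξ) = (A − ϱB)(A − ξB)⁻¹. -/
noncomputable def Mfun {n : ℕ} (A B : Matrix (Fin n) (Fin n) ℂ) (ϱ ξ : ℂ) :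
    Matrix (Fin n) (Fin n) ℂ :=
  (A - ϱ • B) * (A - ξ • B)⁻¹

/-- The ordered product ∏_{i=1}^{j} M(ϱᵢ, ξᵢ) of elementary rational functions. -/
noncomputable def prodM {n : ℕ} (A B : Matrix (Fin n) (Fin n) ℂ) (ϱ ξ : ℕ → ℂ)
    (j : ℕ) : Matrix (Fin n) (Fin n) ℂ :=
  ((List.range j).map fun i => Mfun A B (ϱ i) (ξ i)).prod

open Polynomial

namespace Polynomial
variable {R K : Type*} [CommSemiring R] [Field K]

theorem finrank_degreeLT (n : ℕ) : Module.finrank K (degreeLT K n) = n :=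
  (degreeLTEquiv K n).finrank_eq.trans (Module.finrank_fin_fun K)

theorem mul_mem_degreeLT {f q : R[X]} {a b : ℕ} (hf : f.natDegree ≤ a)
    (hq : q ∈ degreeLT R b) : f * q ∈ degreeLT R (a + b) := by
  rw [mem_degreeLT] at hq ⊢
  calc (f * q).degree ≤ f.degree + q.degree := degree_mul_le f q
    _ ≤ a + q.degree := add_le_add_left (degree_le_of_natDegree_le hf) _
    _ < a + b := WithBot.add_lt_add_left WithBot.coe_ne_bot hq

theorem degreeLT_succ_eq_span_sup_map_mulLeft {f p : K[X]} {m : ℕ} (hf : f.natDegree = 1)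
    (hp : p ∈ degreeLT K (m + 1)) (hfp : IsCoprime f p) :
    K ∙ p ⊔ (degreeLT K m).map (LinearMap.mulLeft K f) = degreeLT K (m + 1) := by
  have hf0 : f ≠ 0 := by rintro rfl; simp at hf
  have hp0 : p ≠ 0 := by
    rintro rfl
    simpa [hf] using natDegree_eq_zero_of_isUnit (isCoprime_zero_right.mp hfp)
  set W := (degreeLT K m).map (LinearMap.mulLeft K f)
  have hpW : p ∉ W := by
    rintro ⟨q, -, rfl⟩
    simpa [hf] using natDegree_eq_zero_of_isUnit (hfp.isUnit_of_dvd' dvd_rfl (dvd_mul_right f q))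
  have hle : K ∙ p ⊔ W ≤ degreeLT K (m + 1) := by
    refine sup_le ((Submodule.span_singleton_le_iff_mem _ _).mpr hp) ?_
    rintro _ ⟨q, hq, rfl⟩
    simpa [add_comm] using mul_mem_degreeLT hf.le hq
  have hW : Module.finrank K W = m :=
    (Submodule.equivMapOfInjective _ (mul_right_injective₀ hf0) _).finrank_eq.symm.trans
      (finrank_degreeLT m)
  have hdisj : K ∙ p ⊓ W = ⊥ :=
    ((Submodule.disjoint_span_singleton' hp0).mpr hpW).symm.eq_bot
  refine Submodule.eq_of_le_of_finrank_eq hle ?_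
  have hdim := Submodule.finrank_sup_add_finrank_inf_eq (K ∙ p) W
  rw [hdisj, finrank_bot, finrank_span_singleton hp0, hW] at hdim
  rw [finrank_degreeLT]; omega

open Finset in
theorem natDegree_prod_le_card {ι : Type*} {s : Finset ι} {g : ι → R[X]}
    (hg : ∀ i ∈ s, (g i).natDegree ≤ 1) :
    (∏ i ∈ s, g i).natDegree ≤ #s :=
  (natDegree_prod_le s g).trans ((sum_le_sum hg).trans (by simp))

theorem span_range_prod_Ico_mul_prod_range {f g : ℕ → K[X]} (m : ℕ)
    (hf : ∀ i < m, (f i).natDegree = 1) (hg : ∀ i < m, (g i).natDegree ≤ 1)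
    (hfg : ∀ i < m, ∀ j < m, IsCoprime (f j) (g i)) :
    Submodule.span K (Set.range fun j : Fin (m + 1) =>
      (∏ i ∈ Finset.Ico (j : ℕ) m, f i) * ∏ i ∈ Finset.range j, g i) = degreeLT K (m + 1) := by
  induction m with
  | zero =>
    classical
    simp [degreeLT_eq_span_X_pow]
  | succ m ih =>
    set q := fun j : Fin (m + 2) =>
      (∏ i ∈ Finset.Ico (j : ℕ) (m + 1), f i) * ∏ i ∈ Finset.range j, g i
    have hinit : Fin.init q = LinearMap.mulLeft K (f m) ∘ fun j : Fin (m + 1) =>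
        (∏ i ∈ Finset.Ico (j : ℕ) m, f i) * ∏ i ∈ Finset.range j, g i := by
      ext1 j
      simp only [q, Fin.init, Fin.val_castSucc, Finset.prod_Ico_succ_top j.is_le,
        Function.comp_apply, LinearMap.mulLeft_apply]
      ring
    have hlast : q (Fin.last (m + 1)) = ∏ i ∈ Finset.range (m + 1), g i := by simp [q]
    rw [← Fin.snoc_init_self q, Fin.range_snoc, Submodule.span_insert, hinit, hlast,
      Set.range_comp, Submodule.span_image,
      ih (fun i hi => hf i (by omega)) (fun i hi => hg i (by omega))
        (fun i hi j hj => hfg i (by omega) j (by omega))]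
    refine degreeLT_succ_eq_span_sup_map_mulLeft (hf m m.lt_succ_self) ?_
      (IsCoprime.prod_right fun i hi => hfg i (by simpa using hi) m m.lt_succ_self)
    have hdeg := natDegree_prod_le_card fun i hi => hg i (Finset.mem_range.mp hi)
    rw [Finset.card_range] at hdeg
    exact mem_degreeLT.mpr
      (degree_le_natDegree.trans_lt (by exact_mod_cast hdeg.trans_lt m.succ.lt_succ_self))

theorem span_range_pow {f : K[X]} (hf : f.natDegree = 1) (m : ℕ) :
    Submodule.span K (Set.range fun j : Fin (m + 1) => f ^ (j : ℕ)) = degreeLT K (m + 1) := by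
  have h := span_range_prod_Ico_mul_prod_range (f := fun _ => f) (g := fun _ => 1) m
    (fun _ _ => hf) (fun _ _ => by simp) (fun _ _ _ _ => isCoprime_one_right)
  simp only [Finset.prod_const, Nat.card_Ico, one_pow, mul_one] at h
  rw [← h, ← Fin.rev_surjective.range_comp]
  congr! 3 with j
  simp only [Function.comp_apply, Fin.val_rev]
  congr 1
  omega

theorem natDegree_one_add_C_mul_X_le (a : K) : (1 + C a * X).natDegree ≤ 1 := by
  rw [add_comm, ← C_1]; exact natDegree_linear_le

theorem natDegree_one_add_C_mul_X {a : K} (ha : a ≠ 0) : (1 + C a * X).natDegree = 1 := by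
  rw [add_comm, ← C_1]; exact natDegree_linear ha

theorem isCoprime_one_add_C_mul_X {a b : K} (hab : a ≠ b) :
    IsCoprime (1 + C a * X) (1 + C b * X) := by
  have h : C (b - a)⁻¹ * (C b - C a) = 1 := by
    rw [← C_sub, ← C_mul, inv_mul_cancel₀ (sub_ne_zero.mpr hab.symm), C_1]
  exact ⟨C (b - a)⁻¹ * C b, -(C (b - a)⁻¹ * C a), by linear_combination h⟩

end Polynomial

section Pencil

variable {n : ℕ} (A B : Matrix (Fin n) (Fin n) ℂ)

theorem Mfun_mul_Mfun {α β γ : ℂ} (hβ : IsUnit (A - β • B)) :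
    Mfun A B α β * Mfun A B β γ = Mfun A B α γ := by
  rw [Mfun, Mfun, Mfun, mul_assoc, ← mul_assoc (A - β • B)⁻¹,
    nonsing_inv_mul _ ((isUnit_iff_isUnit_det _).mp hβ), one_mul]

theorem Mfun_self {α : ℂ} (hα : IsUnit (A - α • B)) : Mfun A B α α = 1 :=
  mul_nonsing_inv _ ((isUnit_iff_isUnit_det _).mp hα)

theorem Mfun_eq_one_add_smul {ρ : ℂ} (hρ : IsUnit (A - ρ • B)) (μ : ℂ) :
    Mfun A B μ ρ = 1 + (ρ - μ) • (B * (A - ρ • B)⁻¹) := by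
  have hsplit : A - μ • B = (A - ρ • B) + (ρ - μ) • B := by rw [sub_smul]; abel
  rw [Mfun, hsplit, add_mul, mul_nonsing_inv _ ((isUnit_iff_isUnit_det _).mp hρ), smul_mul_assoc]

theorem Mfun_eq_aeval {ρ : ℂ} (hρ : IsUnit (A - ρ • B)) (μ : ℂ) :
    Mfun A B μ ρ = aeval (B * (A - ρ • B)⁻¹) (1 + C (ρ - μ) * X) := by
  simp [Mfun_eq_one_add_smul A B hρ, Algebra.algebraMap_eq_smul_one, ← sub_smul]

theorem commute_aeval_of_commute {M N : Matrix (Fin n) (Fin n) ℂ} (h : Commute M N) (p : ℂ[X]) :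
    Commute M (aeval N p) :=
  Algebra.commute_of_mem_adjoin_singleton_of_commute (aeval_mem_adjoin_singleton ℂ N) h

theorem commute_Mfun_B_mul_inv {μ ξ ρ : ℂ} (hξ : IsUnit (A - ξ • B)) (hρ : IsUnit (A - ρ • B))
    (hρξ : ρ ≠ ξ) : Commute (Mfun A B μ ξ) (B * (A - ρ • B)⁻¹) := by
  have hinv : Commute (Mfun A B ρ ξ) (Mfun A B ξ ρ) := by
    rw [Commute, SemiconjBy, Mfun_mul_Mfun A B hξ, Mfun_mul_Mfun A B hρ, Mfun_self A B hρ,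
      Mfun_self A B hξ]
  have hN : Commute (Mfun A B ρ ξ) (B * (A - ρ • B)⁻¹) := by
    have h := (hinv.sub_right (Commute.one_right _)).smul_right (ρ - ξ)⁻¹
    rwa [Mfun_eq_one_add_smul A B hρ, add_sub_cancel_left, smul_smul,
      inv_mul_cancel₀ (sub_ne_zero.mpr hρξ), one_smul] at h
  rw [← Mfun_mul_Mfun A B hρ, Mfun_eq_aeval A B hρ μ]
  exact (commute_aeval_of_commute (Commute.refl _) _).symm.mul_left hN

theorem prodM_succ (ϱ ξ : ℕ → ℂ) (j : ℕ) :
    prodM A B ϱ ξ (j + 1) = prodM A B ϱ ξ j * Mfun A B (ϱ j) (ξ j) := by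
  simp [prodM, List.range_succ]

theorem commute_prodM_B_mul_inv {ϱ ξ : ℕ → ℂ} {ρ : ℂ} {j : ℕ}
    (hξ : ∀ i < j, IsUnit (A - ξ i • B)) (hρξ : ∀ i < j, ρ ≠ ξ i) (hρ : IsUnit (A - ρ • B)) :
    Commute (prodM A B ϱ ξ j) (B * (A - ρ • B)⁻¹) := by
  refine Commute.list_prod_left _ _ fun M hM => ?_
  obtain ⟨i, hi, rfl⟩ := List.mem_map.mp hM
  rw [List.mem_range] at hi
  exact commute_Mfun_B_mul_inv A B (hξ i hi) hρ (hρξ i hi)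

theorem prodM_mul_aeval_prod {ϱ ξ : ℕ → ℂ} {ρ : ℂ} {j : ℕ}
    (hξ : ∀ i < j, IsUnit (A - ξ i • B)) (hρξ : ∀ i < j, ρ ≠ ξ i) (hρ : IsUnit (A - ρ • B)) :
    prodM A B ϱ ξ j * aeval (B * (A - ρ • B)⁻¹) (∏ i ∈ Finset.range j, (1 + C (ρ - ξ i) * X)) =
      aeval (B * (A - ρ • B)⁻¹) (∏ i ∈ Finset.range j, (1 + C (ρ - ϱ i) * X)) := by
  induction j with
  | zero => simp [prodM]
  | succ j ih =>
    have hξj := hξ j j.lt_succ_self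
    have hcomm := commute_aeval_of_commute
      (commute_Mfun_B_mul_inv A B (μ := ϱ j) hξj hρ (hρξ j j.lt_succ_self))
      (∏ i ∈ Finset.range j, (1 + C (ρ - ξ i) * X))
    rw [prodM_succ, Finset.prod_range_succ, Finset.prod_range_succ, map_mul, map_mul,
      ← Mfun_eq_aeval A B hρ, ← Mfun_eq_aeval A B hρ,
      ← ih (fun i hi => hξ i (by omega)) (fun i hi => hρξ i (by omega))]
    rw [mul_assoc (prodM _ _ _ _ _), ← mul_assoc (Mfun _ _ _ _), hcomm.eq,
      mul_assoc _ (Mfun _ _ _ _), ← mul_assoc (prodM _ _ _ _ _), Mfun_mul_Mfun A B hξj]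

theorem prodM_eq_prodM_mul_aeval {ϱ ξ : ℕ → ℂ} {ρ : ℂ} {j m : ℕ} (hjm : j ≤ m)
    (hξ : ∀ i < m, IsUnit (A - ξ i • B)) (hρξ : ∀ i < m, ρ ≠ ξ i) (hρ : IsUnit (A - ρ • B)) :
    prodM A B ϱ ξ j = prodM A B (fun _ => ρ) ξ m * aeval (B * (A - ρ • B)⁻¹)
      ((∏ i ∈ Finset.Ico j m, (1 + C (ρ - ξ i) * X)) *
        ∏ i ∈ Finset.range j, (1 + C (ρ - ϱ i) * X)) := by
  have hξ' : ∀ i < j, IsUnit (A - ξ i • B) := fun i hi => hξ i (hi.trans_le hjm)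
  have hρξ' : ∀ i < j, ρ ≠ ξ i := fun i hi => hρξ i (hi.trans_le hjm)
  have hinv : prodM A B (fun _ => ρ) ξ m *
      aeval (B * (A - ρ • B)⁻¹) (∏ i ∈ Finset.range m, (1 + C (ρ - ξ i) * X)) = 1 := by
    simpa using prodM_mul_aeval_prod A B (ϱ := fun _ => ρ) hξ hρξ hρ
  have hcomm := commute_aeval_of_commute (commute_prodM_B_mul_inv A B (ϱ := ϱ) hξ' hρξ' hρ)
    (∏ i ∈ Finset.range j, (1 + C (ρ - ξ i) * X))
  rw [map_mul, ← prodM_mul_aeval_prod A B hξ' hρξ' hρ, hcomm.eq, ← mul_assoc (aeval _ _),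
    ← map_mul, mul_comm, Finset.prod_range_mul_prod_Ico _ hjm, ← mul_assoc, hinv, one_mul]

end Pencil

theorem rational_krylov_as_image_of_krylov_general {n : ℕ}
    (A B : Matrix (Fin n) (Fin n) ℂ) (k : ℕ)
    (ξ : ℕ → ℂ) (hξ : ∀ i, i < k - 1 → IsUnit (A - ξ i • B))
    (ϱ : ℕ → ℂ) (hϱ : ∀ i j, i < k - 1 → j < k - 1 → ϱ i ≠ ξ j)
    (ρhat : ℂ) (hρhat : ∀ j, j < k - 1 → ρhat ≠ ξ j) (hρhatu : IsUnit (A - ρhat • B))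
    (ρchk : ℂ) (hρchk : ρchk ≠ ρhat)
    (v : Fin n → ℂ) :
    Submodule.span ℂ (Set.range fun j : Fin k => (prodM A B ϱ ξ (j : ℕ)).mulVec v) =
      Submodule.map (prodM A B (fun _ => ρhat) ξ (k - 1)).mulVecLin
        (Submodule.span ℂ
          (Set.range fun j : Fin k => ((Mfun A B ρchk ρhat) ^ (j : ℕ)).mulVec v)) := by
  rcases k with _ | m
  · simp
  simp only [Nat.add_sub_cancel] at hξ hϱ hρhat ⊢
  let L : ℂ[X] →ₗ[ℂ] Fin n → ℂ :=
    LinearMap.applyₗ v ∘ₗ Matrix.toLin'.toLinearMap ∘ₗ (aeval (B * (A - ρhat • B)⁻¹)).toLinearMap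
  have hL : ∀ p, L p = aeval (B * (A - ρhat • B)⁻¹) p *ᵥ v := fun p => rfl
  have hrat : Submodule.span ℂ (Set.range fun j : Fin (m + 1) => prodM A B ϱ ξ j *ᵥ v) =
      (degreeLT ℂ (m + 1)).map ((prodM A B (fun _ => ρhat) ξ m).mulVecLin ∘ₗ L) := by
    rw [← span_range_prod_Ico_mul_prod_range m (f := fun i => 1 + C (ρhat - ξ i) * X)
      (g := fun i => 1 + C (ρhat - ϱ i) * X)
      (fun i hi => natDegree_one_add_C_mul_X (sub_ne_zero.mpr (hρhat i hi)))
      (fun i _ => natDegree_one_add_C_mul_X_le _)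
      (fun i hi j hj => isCoprime_one_add_C_mul_X (sub_right_injective.ne (hϱ i j hi hj).symm)),
      Submodule.map_span, ← Set.range_comp]
    congr 2; funext j
    rw [Function.comp_apply, LinearMap.comp_apply, hL, mulVecLin_apply, mulVec_mulVec,
      ← prodM_eq_prodM_mul_aeval A B (Nat.lt_succ_iff.mp j.2) hξ hρhat hρhatu]
  have hkry : Submodule.span ℂ
      (Set.range fun j : Fin (m + 1) => Mfun A B ρchk ρhat ^ (j : ℕ) *ᵥ v) =
        (degreeLT ℂ (m + 1)).map L := by
    rw [← span_range_pow (natDegree_one_add_C_mul_X (sub_ne_zero.mpr hρchk.symm)) m,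
      Submodule.map_span, ← Set.range_comp]
    congr! 3 with j
    rw [Function.comp_apply, hL, map_pow, Mfun_eq_aeval A B hρhatu]
  rw [hrat, hkry, Submodule.map_comp]

/-- A rational Krylov subspace is the image, under the rational matrix function
∏ M(ρhat,ξᵢ), of the ordinary Krylov subspace generated by M(ρchk,ρhat). -/
theorem rational_krylov_as_image_of_krylov {n : ℕ}
    (A B : Matrix (Fin n) (Fin n) ℂ) (k : ℕ)
    (ξ : ℕ → ℂ) (hξ : ∀ i, i < k - 1 → IsUnit (A - ξ i • B))
    (ϱ : ℕ → ℂ) (hϱ : ∀ i j, i < k - 1 → j < k - 1 → ϱ i ≠ ξ j)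
    (ρhat : ℂ) (hρhat : ∀ j, j < k - 1 → ρhat ≠ ξ j) (hρhatu : IsUnit (A - ρhat • B))
    (ρchk : ℂ) (hρchk : ρchk ≠ ρhat)
    (v : Fin n → ℂ) (hv : v ≠ 0) :
    Submodule.span ℂ (Set.range fun j : Fin k => (prodM A B ϱ ξ (j : ℕ)).mulVec v) =
      Submodule.map (prodM A B (fun _ => ρhat) ξ (k - 1)).mulVecLin
        (Submodule.span ℂ
          (Set.range fun j : Fin k => ((Mfun A B ρchk ρhat) ^ (j : ℕ)).mulVec v)) :=
  rational_krylov_as_image_of_krylov_general A B k ξ hξ ϱ hϱ ρhat hρhat hρhatu ρchk hρchk v
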